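/- Let Φ = (φ_1,…,φ_n) be a doubly covariant (doubly transitive) equiangular tight frame for ℂ^d with n > d. Then for every triple of distinct indices j, k, ℓ there is a complex number ζ_{j,k,ℓ} with ζ_{j,k,ℓ}^{2n} = 1 such that TP(j,k,ℓ) = ζ_{j,k,ℓ} · ((n−d)/(d(n−1)))^{3/2}. -/

import Mathlib

open scoped ComplexInnerProductSpace

noncomputable section

/-- `(φ_1, …, φ_n)` is an equiangular tight frame (ETF) for `ℂ^d`. -/
def IsETF (d n : ℕ) (φ : Fin n → EuclideanSpace ℂ (Fin d)) : Prop :=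
  (∀ x : EuclideanSpace ℂ (Fin d), x = ((d : ℂ) / (n : ℂ)) • ∑ j, ⟪φ j, x⟫ • φ j) ∧
  (∀ j, ‖φ j‖ = 1) ∧
  (∃ α : ℝ, 0 ≤ α ∧ ∀ j k, j ≠ k → ‖⟪φ j, φ k⟫‖ = α)

/-- The triple product `TP(j,k,ℓ) = ⟨φ_j,φ_k⟩⟨φ_k,φ_ℓ⟩⟨φ_ℓ,φ_j⟩`. -/
def TP {d n : ℕ} (φ : Fin n → EuclideanSpace ℂ (Fin d)) (j k l : Fin n) : ℂ :=
  ⟪φ j, φ k⟫ * ⟪φ k, φ l⟫ * ⟪φ l, φ j⟫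

/-- `U` is a symmetry of `φ` with induced permutation `σ`:
`U φ_j φ_j^* U^* = φ_{σ(j)} φ_{σ(j)}^*` for all `j`. -/
def IsSymmetry {d n : ℕ} (φ : Fin n → EuclideanSpace ℂ (Fin d))
    (U : EuclideanSpace ℂ (Fin d) ≃ₗᵢ[ℂ] EuclideanSpace ℂ (Fin d))
    (σ : Equiv.Perm (Fin n)) : Prop :=
  ∀ j x, U (⟪φ j, U.symm x⟫ • φ j) = ⟪φ (σ j), x⟫ • φ (σ j)

/-- `φ` is doubly covariant: the symmetry group acts 2-transitively on the indices. -/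
def DoublyCovariant {d n : ℕ} (φ : Fin n → EuclideanSpace ℂ (Fin d)) : Prop :=
  ∀ j k j' k' : Fin n, j ≠ k → j' ≠ k' →
    ∃ (U : EuclideanSpace ℂ (Fin d) ≃ₗᵢ[ℂ] EuclideanSpace ℂ (Fin d))
      (σ : Equiv.Perm (Fin n)),
      IsSymmetry φ U σ ∧ σ j = j' ∧ σ k = k'

/-!
For `a ≠ b` put `R(a) = ∏_{m ≠ a} ⟨φ_a, φ_m⟩` and `P(a, b) = ∏_{m ≠ a, b} TP(a, m, b)`. Expanding
the product gives `P(a, b) ⟨φ_a, φ_b⟩ⁿ = R(a) conj (R(b)) |⟨φ_a, φ_b⟩|^{2(n-2)}`, so over the three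
sides of a triangle `j, k, l` the rows cancel against their conjugates and
`P(j, k) P(k, l) P(l, j) TP(j, k, l)ⁿ ≥ 0`. A symmetry multiplies each `φ_a` by a phase, and these
phases cancel in triple products; so by double transitivity `P` is one constant, which is real
because `P(k, j) = conj (P(j, k))`. Then `P³ TP(j, k, l)ⁿ ≥ 0` with `P` real forces
`TP(j, k, l)^{2n} = |TP(j, k, l)|^{2n}`, while `|TP(j, k, l)| = α³` and the frame identity applied
to `φ_j` gives `α² = (n - d) / (d (n - 1))`.
-/

open ComplexConjugate Finset

open scoped ComplexOrder

lemma Complex.pow_two_mul_eq_norm_pow_of_nonneg {P T : ℂ} {m : ℕ} (hP : conj P = P)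
    (hP0 : P ≠ 0) (h : 0 ≤ P ^ 3 * T ^ m) : T ^ (2 * m) = (‖T‖ : ℂ) ^ (2 * m) := by
  have hsq : P ^ 2 = (‖P‖ : ℂ) ^ 2 := by
    obtain ⟨r, rfl⟩ := Complex.conj_eq_iff_real.1 hP
    rw [Complex.norm_real, Real.norm_eq_abs, ← Complex.ofReal_pow, ← Complex.ofReal_pow, sq_abs]
  have hcancel : P ^ 6 * T ^ (2 * m) = P ^ 6 * (‖T‖ : ℂ) ^ (2 * m) := by
    calc P ^ 6 * T ^ (2 * m) = (P ^ 3 * T ^ m) ^ 2 := by ring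
      _ = (‖P ^ 3 * T ^ m‖ : ℂ) ^ 2 := by rw [← Complex.eq_coe_norm_of_nonneg h]
      _ = (P ^ 2) ^ 3 * (‖T‖ : ℂ) ^ (2 * m) := by
        rw [hsq]; push_cast [norm_mul, norm_pow]; ring
      _ = P ^ 6 * (‖T‖ : ℂ) ^ (2 * m) := by ring
  exact mul_left_cancel₀ (pow_ne_zero 6 hP0) hcancel

lemma Complex.exists_pow_eq_one_mul_norm {T : ℂ} {m : ℕ} (h : T ^ m = (‖T‖ : ℂ) ^ m) :
    ∃ ζ : ℂ, ζ ^ m = 1 ∧ T = ζ * ‖T‖ := by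
  obtain rfl | hT := eq_or_ne T 0
  · exact ⟨1, one_pow m, by simp⟩
  have hnorm : (‖T‖ : ℂ) ≠ 0 := by exact_mod_cast norm_ne_zero_iff.2 hT
  exact ⟨T / ‖T‖, by rw [div_pow, h, div_self (pow_ne_zero m hnorm)],
    (div_mul_cancel₀ T hnorm).symm⟩

section GramProducts

variable {d n : ℕ} (φ : Fin n → EuclideanSpace ℂ (Fin d))

def rowProd (a : Fin n) : ℂ :=
  ∏ m ∈ univ.erase a, ⟪φ a, φ m⟫

def pairProd (a b : Fin n) : ℂ :=
  ∏ m ∈ (univ.erase a).erase b, TP φ a m b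

variable {φ}

lemma conj_TP (a b c : Fin n) : conj (TP φ a b c) = TP φ c b a := by
  simp only [TP, map_mul, inner_conj_symm]
  ring

lemma conj_pairProd (a b : Fin n) : conj (pairProd φ a b) = pairProd φ b a := by
  simp only [pairProd, map_prod, conj_TP, erase_right_comm]

lemma norm_TP {α : ℝ} (hα : ∀ j k, j ≠ k → ‖⟪φ j, φ k⟫‖ = α) {a b c : Fin n} (hab : a ≠ b)
    (hac : a ≠ c) (hbc : b ≠ c) : ‖TP φ a b c‖ = α ^ 3 := by
  rw [TP, norm_mul, norm_mul, hα a b hab, hα b c hbc, hα c a hac.symm]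
  ring

lemma pairProd_ne_zero {α : ℝ} (hα : ∀ j k, j ≠ k → ‖⟪φ j, φ k⟫‖ = α) (hα0 : α ≠ 0)
    {a b : Fin n} (hab : a ≠ b) : pairProd φ a b ≠ 0 := by
  refine prod_ne_zero_iff.2 fun m hm => norm_ne_zero_iff.1 ?_
  obtain ⟨hmb, hma, -⟩ := by simpa only [mem_erase] using hm
  rw [norm_TP hα (Ne.symm hma) hab hmb]
  exact pow_ne_zero 3 hα0

lemma pairProd_mul_inner_pow {a b : Fin n} (hab : a ≠ b) :
    pairProd φ a b * ⟪φ a, φ b⟫ ^ n =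
      rowProd φ a * conj (rowProd φ b) * (‖⟪φ a, φ b⟫‖ : ℂ) ^ (2 * (n - 2)) := by
  set s := (univ.erase a).erase b
  have hn : 2 ≤ n := Fin.nontrivial_iff_two_le.1 ⟨⟨a, b, hab⟩⟩
  have hcard : s.card = n - 2 := by
    rw [card_erase_of_mem (mem_erase.2 ⟨hab.symm, mem_univ b⟩), card_erase_of_mem (mem_univ a),
      card_univ, Fintype.card_fin, Nat.sub_sub]
  have hrow_a : rowProd φ a = ⟪φ a, φ b⟫ * ∏ m ∈ s, ⟪φ a, φ m⟫ :=
    (mul_prod_erase _ _ (mem_erase.2 ⟨hab.symm, mem_univ b⟩)).symm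
  have hrow_b : conj (rowProd φ b) = ⟪φ a, φ b⟫ * ∏ m ∈ s, ⟪φ m, φ b⟫ := by
    simp only [rowProd, map_prod, inner_conj_symm, s, erase_right_comm (s := univ) (a := a)]
    exact (mul_prod_erase _ (fun m => ⟪φ m, φ b⟫) (mem_erase.2 ⟨hab, mem_univ a⟩)).symm
  have hpair : pairProd φ a b =
      (∏ m ∈ s, ⟪φ a, φ m⟫) * (∏ m ∈ s, ⟪φ m, φ b⟫) * ⟪φ b, φ a⟫ ^ (n - 2) := by
    simp only [pairProd, TP, prod_mul_distrib, prod_const, hcard, s]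
  have hnorm : (‖⟪φ a, φ b⟫‖ : ℂ) ^ 2 = ⟪φ b, φ a⟫ * ⟪φ a, φ b⟫ := by
    rw [← Complex.conj_mul', inner_conj_symm]
  obtain ⟨q, rfl⟩ : ∃ q, n = q + 2 := ⟨n - 2, by omega⟩
  rw [hpair, hrow_a, hrow_b, pow_mul, hnorm, Nat.add_sub_cancel]
  ring

lemma pairProd_cycle_mul_TP_pow_nonneg {j k l : Fin n} (hjk : j ≠ k) (hjl : j ≠ l)
    (hkl : k ≠ l) : 0 ≤ pairProd φ j k * pairProd φ k l * pairProd φ l j * TP φ j k l ^ n := by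
  have hcycle : pairProd φ j k * pairProd φ k l * pairProd φ l j * TP φ j k l ^ n =
      rowProd φ j * conj (rowProd φ j) * (rowProd φ k * conj (rowProd φ k)) *
        (rowProd φ l * conj (rowProd φ l)) *
        ((‖⟪φ j, φ k⟫‖ : ℂ) * ‖⟪φ k, φ l⟫‖ * ‖⟪φ l, φ j⟫‖) ^ (2 * (n - 2)) := by
    calc _ = pairProd φ j k * ⟪φ j, φ k⟫ ^ n * (pairProd φ k l * ⟪φ k, φ l⟫ ^ n) *
          (pairProd φ l j * ⟪φ l, φ j⟫ ^ n) := by rw [TP]; ring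
      _ = _ := by
        rw [pairProd_mul_inner_pow hjk, pairProd_mul_inner_pow hkl,
          pairProd_mul_inner_pow hjl.symm]
        ring
  rw [hcycle]
  have hnorms : (0 : ℂ) ≤ (‖⟪φ j, φ k⟫‖ : ℂ) * ‖⟪φ k, φ l⟫‖ * ‖⟪φ l, φ j⟫‖ := by
    exact_mod_cast by positivity
  exact mul_nonneg (mul_nonneg (mul_nonneg (mul_star_self_nonneg _) (mul_star_self_nonneg _))
    (mul_star_self_nonneg _)) (pow_nonneg hnorms _)

end GramProducts

section Symmetry

variable {d n : ℕ} {φ : Fin n → EuclideanSpace ℂ (Fin d)}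
  {U : EuclideanSpace ℂ (Fin d) ≃ₗᵢ[ℂ] EuclideanSpace ℂ (Fin d)} {σ : Equiv.Perm (Fin n)}

lemma IsSymmetry.exists_phase (hnorm : ∀ j, ‖φ j‖ = 1) (h : IsSymmetry φ U σ) :
    ∃ μ : Fin n → ℂ, (∀ a, conj (μ a) * μ a = 1) ∧ ∀ a, U (φ a) = μ a • φ (σ a) := by
  have hU : ∀ a, U (φ a) = ⟪φ (σ a), U (φ a)⟫ • φ (σ a) := fun a => by
    simpa [hnorm] using h a (U (φ a))
  refine ⟨fun a => ⟪φ (σ a), U (φ a)⟫, fun a => ?_, hU⟩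
  have hμ : ‖⟪φ (σ a), U (φ a)⟫‖ = 1 := by
    simpa [norm_smul, hnorm] using (congrArg norm (hU a)).symm
  rw [RCLike.conj_mul, hμ]
  simp

lemma IsSymmetry.TP_apply (hnorm : ∀ j, ‖φ j‖ = 1) (h : IsSymmetry φ U σ) (a b c : Fin n) :
    TP φ (σ a) (σ b) (σ c) = TP φ a b c := by
  obtain ⟨μ, hμ, hU⟩ := h.exists_phase hnorm
  have hinner : ∀ x y, ⟪φ x, φ y⟫ = conj (μ x) * μ y * ⟪φ (σ x), φ (σ y)⟫ := fun x y => by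
    rw [← U.inner_map_map, hU, hU, inner_smul_left, inner_smul_right, mul_assoc]
  have hphases : conj (μ a) * μ a * (conj (μ b) * μ b) * (conj (μ c) * μ c) = 1 := by
    rw [hμ, hμ, hμ, one_mul, one_mul]
  rw [TP, TP, hinner a b, hinner b c, hinner c a]
  linear_combination
    (-(⟪φ (σ a), φ (σ b)⟫ * ⟪φ (σ b), φ (σ c)⟫ * ⟪φ (σ c), φ (σ a)⟫)) * hphases

lemma IsSymmetry.pairProd_apply (hnorm : ∀ j, ‖φ j‖ = 1) (h : IsSymmetry φ U σ) (a b : Fin n) :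
    pairProd φ (σ a) (σ b) = pairProd φ a b :=
  (prod_equiv σ (by simp [σ.injective.ne_iff]) fun m _ => (h.TP_apply hnorm a m b).symm).symm

lemma DoublyCovariant.pairProd_eq (hcov : DoublyCovariant φ) (hnorm : ∀ j, ‖φ j‖ = 1)
    {a b a' b' : Fin n} (hab : a ≠ b) (hab' : a' ≠ b') : pairProd φ a b = pairProd φ a' b' := by
  obtain ⟨U, σ, h, rfl, rfl⟩ := hcov a b a' b' hab hab'
  exact (h.pairProd_apply hnorm a b).symm

lemma DoublyCovariant.TP_pow_eq_norm_pow (hcov : DoublyCovariant φ) (hnorm : ∀ j, ‖φ j‖ = 1)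
    {α : ℝ} (hα : ∀ j k, j ≠ k → ‖⟪φ j, φ k⟫‖ = α) {j k l : Fin n} (hjk : j ≠ k) (hjl : j ≠ l)
    (hkl : k ≠ l) : TP φ j k l ^ (2 * n) = (‖TP φ j k l‖ : ℂ) ^ (2 * n) := by
  obtain rfl | hα0 := eq_or_ne α 0
  · have hT : TP φ j k l = 0 := norm_eq_zero.1 (by rw [norm_TP hα hjk hjl hkl]; ring)
    rw [hT, norm_zero, Complex.ofReal_zero]
  set P := pairProd φ j k
  have hPreal : conj P = P := by rw [conj_pairProd, hcov.pairProd_eq hnorm hjk.symm hjk]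
  have hcycle := pairProd_cycle_mul_TP_pow_nonneg (φ := φ) hjk hjl hkl
  rw [hcov.pairProd_eq hnorm hkl hjk, hcov.pairProd_eq hnorm hjl.symm hjk] at hcycle
  exact Complex.pow_two_mul_eq_norm_pow_of_nonneg hPreal (pairProd_ne_zero hα hα0 hjk)
    (by rwa [pow_three, ← mul_assoc])

end Symmetry

lemma sq_eq_welch_bound {d n : ℕ} {φ : Fin n → EuclideanSpace ℂ (Fin d)}
    (hframe : ∀ x, x = ((d : ℂ) / (n : ℂ)) • ∑ j, ⟪φ j, x⟫ • φ j) (hnorm : ∀ j, ‖φ j‖ = 1)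
    {α : ℝ} (hα : ∀ j k, j ≠ k → ‖⟪φ j, φ k⟫‖ = α) (hn : 2 ≤ n) :
    α ^ 2 = ((n : ℝ) - d) / (d * ((n : ℝ) - 1)) := by
  set j : Fin n := ⟨0, by omega⟩
  have hsum : ∑ m, ⟪φ m, φ j⟫ * ⟪φ j, φ m⟫ = ((1 + ((n : ℝ) - 1) * α ^ 2 : ℝ) : ℂ) := by
    have hoff : ∀ m ∈ univ.erase j, ⟪φ m, φ j⟫ * ⟪φ j, φ m⟫ = ((α ^ 2 : ℝ) : ℂ) := fun m hm => by
      rw [← inner_conj_symm (φ m) (φ j), RCLike.conj_mul, hα j m (ne_of_mem_erase hm).symm]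
      push_cast; rfl
    rw [← add_sum_erase _ _ (mem_univ j), sum_congr rfl hoff, sum_const,
      card_erase_of_mem (mem_univ j), inner_self_eq_one_of_norm_eq_one (hnorm j), card_univ,
      Fintype.card_fin, nsmul_eq_mul]
    push_cast [Nat.cast_sub (by omega : 1 ≤ n)]
    ring
  have hone := congrArg (fun x => ⟪φ j, x⟫) (hframe (φ j))
  simp only [inner_smul_right, inner_sum, inner_self_eq_one_of_norm_eq_one (hnorm j), hsum] at hone
  have hn0 : (n : ℝ) ≠ 0 := by positivity
  have hreal : (n : ℝ) = d * (1 + ((n : ℝ) - 1) * α ^ 2) := by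
    have : (n : ℂ) ≠ 0 := by exact_mod_cast hn0
    field_simp at hone
    exact_mod_cast hone
  have hd0 : (d : ℝ) ≠ 0 := by rintro hd; rw [hd, zero_mul] at hreal; exact hn0 hreal
  have hn1 : (n : ℝ) - 1 ≠ 0 := by
    have : (2 : ℝ) ≤ n := by exact_mod_cast hn
    linarith
  field_simp
  linear_combination -hreal

theorem doubly_covariant_triple_products {d n : ℕ}
    (φ : Fin n → EuclideanSpace ℂ (Fin d)) (hETF : IsETF d n φ)
    (hcov : DoublyCovariant φ) :
    ∀ j k l : Fin n, j ≠ k → j ≠ l → k ≠ l →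
      ∃ ζ : ℂ, ζ ^ (2 * n) = 1 ∧
        TP φ j k l =
          ζ * (((((n : ℝ) - d) / (d * ((n : ℝ) - 1))) ^ ((3 : ℝ) / 2) : ℝ) : ℂ) := by
  intro j k l hjk hjl hkl
  obtain ⟨hframe, hnorm, α, hα0, hα⟩ := hETF
  have hn : 2 ≤ n := Fin.nontrivial_iff_two_le.1 ⟨⟨j, k, hjk⟩⟩
  obtain ⟨ζ, hζ, hT⟩ :=
    Complex.exists_pow_eq_one_mul_norm (hcov.TP_pow_eq_norm_pow hnorm hα hjk hjl hkl)
  have hnormT : ‖TP φ j k l‖ = (((n : ℝ) - d) / (d * ((n : ℝ) - 1))) ^ ((3 : ℝ) / 2) := by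
    rw [norm_TP hα hjk hjl hkl, ← sq_eq_welch_bound hframe hnorm hα hn, ← Real.rpow_natCast,
      ← Real.rpow_natCast, ← Real.rpow_mul hα0]
    norm_num
  exact ⟨ζ, hζ, hnormT ▸ hT⟩
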